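/- arXiv:math/0204028 — 3 statements merged into one kernel-verified Lean document; each statement's English description precedes it below -/
import Mathlib

section
/- If t ↦ (π(t),p(t)) is a solution of (60) on an interval J containing 0 and p(0) = 0, then p(t) = 0 for all t ∈ J, and moreover ‖π(t)‖ is constant on J (i.e. the set {p = 0} is invariant and the subcasimir ‖π‖ is conserved on it). -/
noncomputable section

open scoped RealInnerProductSpace

/-- ℝ³ with the standard (Euclidean) inner product and norm. -/
abbrev E3 : Type := EuclideanSpace ℝ (Fin 3)

/-- Build a vector of `E3` from its three coordinates. -/
def vec3 (x y z : ℝ) : E3 := (WithLp.equiv 2 (Fin 3 → ℝ)).symm ![x, y, z]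

/-- The standard cross product on ℝ³. -/
def cross3 (u v : E3) : E3 :=
  vec3 (u 1 * v 2 - u 2 * v 1) (u 2 * v 0 - u 0 * v 2) (u 0 * v 1 - u 1 * v 0)

/-- The vertical unit vector k = (0,0,1). -/
def kvec : E3 := vec3 0 0 1

/-- 𝐈⁻¹ u = (u₁/I₁, u₂/I₂, u₃/I₃). -/
def Iinv (I1 I2 I3 : ℝ) (u : E3) : E3 := vec3 (u 0 / I1) (u 1 / I2) (u 2 / I3)

/-- 𝐌⁻¹ u = (u₁/M₁, u₂/M₂, u₃/M₃). -/
def Minv (M1 M2 M3 : ℝ) (u : E3) : E3 := vec3 (u 0 / M1) (u 1 / M2) (u 2 / M3)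

/-- `(pm, pv) : ℝ → ℝ³ × ℝ³` is a (global) solution of the underwater-vehicle
Poisson system (60): dπ/dt = π×(𝐈⁻¹π) + p×(𝐌⁻¹p), dp/dt = p×(𝐈⁻¹π). -/
def IsSol60 (I1 I2 I3 M1 M2 M3 : ℝ) (pm pv : ℝ → E3) : Prop :=
  (∀ t : ℝ, HasDerivAt pm
      (cross3 (pm t) (Iinv I1 I2 I3 (pm t)) + cross3 (pv t) (Minv M1 M2 M3 (pv t))) t) ∧
  (∀ t : ℝ, HasDerivAt pv (cross3 (pv t) (Iinv I1 I2 I3 (pm t))) t)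

/-- Solution of (60) on a subset `J ⊆ ℝ`. -/
def IsSol60On (I1 I2 I3 M1 M2 M3 : ℝ) (J : Set ℝ) (pm pv : ℝ → E3) : Prop :=
  (∀ t ∈ J, HasDerivWithinAt pm
      (cross3 (pm t) (Iinv I1 I2 I3 (pm t)) + cross3 (pv t) (Minv M1 M2 M3 (pv t))) J t) ∧
  (∀ t ∈ J, HasDerivWithinAt pv (cross3 (pv t) (Iinv I1 I2 I3 (pm t))) J t)

/-- The blown-up space P̂ = {(w,ẇ,a,γ) : ‖w‖ = 1, w·ẇ = 0, a ≥ 0} ⊆ ℝ³×ℝ³×ℝ×ℝ. -/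
def Phat : Set (E3 × E3 × ℝ × ℝ) :=
  {x | ‖x.1‖ = 1 ∧ ⟪x.1, x.2.1⟫ = 0 ∧ 0 ≤ x.2.2.1}

/-- The blow-down map β(w,ẇ,a,γ) = (ẇ + γw, aw). -/
def blowdown (x : E3 × E3 × ℝ × ℝ) : E3 × E3 :=
  (x.2.1 + x.2.2.2 • x.1, x.2.2.1 • x.1)

/-- `(w, dw) : ℝ → ℝ³ × ℝ³` is a (global) solution of the blown-up dynamics (8)
with fixed parameters `a`, `γ`:
dw/dt = w×(𝐈⁻¹(ẇ+γw)), dẇ/dt = ẇ×(𝐈⁻¹(ẇ+γw)) + a² w×(𝐌⁻¹w). -/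
def IsSol8 (I1 I2 I3 M1 M2 M3 a γ : ℝ) (w dw : ℝ → E3) : Prop :=
  (∀ t : ℝ, HasDerivAt w (cross3 (w t) (Iinv I1 I2 I3 (dw t + γ • w t))) t) ∧
  (∀ t : ℝ, HasDerivAt dw
      (cross3 (dw t) (Iinv I1 I2 I3 (dw t + γ • w t))
        + a ^ 2 • cross3 (w t) (Minv M1 M2 M3 (w t))) t)

/-- Solution of (8) on a subset `J ⊆ ℝ`. -/
def IsSol8On (I1 I2 I3 M1 M2 M3 a γ : ℝ) (J : Set ℝ) (w dw : ℝ → E3) : Prop :=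
  (∀ t ∈ J, HasDerivWithinAt w (cross3 (w t) (Iinv I1 I2 I3 (dw t + γ • w t))) J t) ∧
  (∀ t ∈ J, HasDerivWithinAt dw
      (cross3 (dw t) (Iinv I1 I2 I3 (dw t + γ • w t))
        + a ^ 2 • cross3 (w t) (Minv M1 M2 M3 (w t))) J t)

/-! Both equations of (60) have the form ẋ = x × v, so ‖x‖² has derivative 2⟪x, x × v⟫ = 0 and
‖x‖ is conserved on the interval. Hence p, vanishing at 0, vanishes on J, and then π̇ = π × 𝐈⁻¹π
conserves ‖π‖ as well. -/

lemma inner_cross3_self_left (u v : E3) : ⟪u, cross3 u v⟫ = 0 := by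
  simp [cross3, vec3, PiLp.inner_apply, Fin.sum_univ_three]
  ring

lemma cross3_zero_left (v : E3) : cross3 0 v = 0 := by
  ext i
  fin_cases i <;> simp [cross3, vec3]

lemma Convex.eq_of_hasDerivWithinAt_eq_zero {F : Type*} [NormedAddCommGroup F] [NormedSpace ℝ F]
    {f : ℝ → F} {J : Set ℝ} (hJ : Convex ℝ J) (hf : ∀ t ∈ J, HasDerivWithinAt f 0 J t)
    {s t : ℝ} (hs : s ∈ J) (ht : t ∈ J) : f t = f s := by
  have h := norm_image_sub_le_of_norm_hasDerivWithin_le (f' := fun _ => (0 : F)) (C := 0)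
    hf (fun _ _ => norm_zero.le) hJ hs ht
  rwa [zero_mul, norm_le_zero_iff, sub_eq_zero] at h

lemma Convex.norm_eq_of_inner_hasDerivWithinAt_eq_zero {F : Type*} [NormedAddCommGroup F]
    [InnerProductSpace ℝ F] {f f' : ℝ → F} {J : Set ℝ} (hJ : Convex ℝ J)
    (hf : ∀ t ∈ J, HasDerivWithinAt f (f' t) J t) (horth : ∀ t ∈ J, ⟪f t, f' t⟫ = 0)
    {s t : ℝ} (hs : s ∈ J) (ht : t ∈ J) : ‖f t‖ = ‖f s‖ := by
  have hsq : ∀ u ∈ J, HasDerivWithinAt (‖f ·‖ ^ 2) 0 J u := fun u hu => by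
    simpa [horth u hu] using (hf u hu).norm_sq
  exact (sq_eq_sq₀ (norm_nonneg _) (norm_nonneg _)).mp
    (hJ.eq_of_hasDerivWithinAt_eq_zero hsq hs ht)

lemma Convex.norm_eq_of_hasDerivWithinAt_cross3_self {f g : ℝ → E3} {J : Set ℝ}
    (hJ : Convex ℝ J) (hf : ∀ t ∈ J, HasDerivWithinAt f (cross3 (f t) (g t)) J t)
    {s t : ℝ} (hs : s ∈ J) (ht : t ∈ J) : ‖f t‖ = ‖f s‖ :=
  hJ.norm_eq_of_inner_hasDerivWithinAt_eq_zero hf (fun _ _ => inner_cross3_self_left _ _) hs ht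

theorem statement3_general (I1 I2 I3 M1 M2 M3 : ℝ)
    (J : Set ℝ) (hJ : J.OrdConnected) (h0 : (0 : ℝ) ∈ J)
    (pm pv : ℝ → E3) (hsol : IsSol60On I1 I2 I3 M1 M2 M3 J pm pv)
    (hpv0 : pv 0 = 0) :
    (∀ t ∈ J, pv t = 0) ∧ (∀ s ∈ J, ∀ t ∈ J, ‖pm t‖ = ‖pm s‖) := by
  obtain ⟨hpm, hpv⟩ := hsol
  have hconv : Convex ℝ J := hJ.convex
  have hpv_zero : ∀ t ∈ J, pv t = 0 := fun t ht => by
    simpa [hpv0] using hconv.norm_eq_of_hasDerivWithinAt_cross3_self hpv h0 ht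
  have hpm_free : ∀ t ∈ J, HasDerivWithinAt pm (cross3 (pm t) (Iinv I1 I2 I3 (pm t))) J t :=
    fun t ht => by simpa [hpv_zero t ht, cross3_zero_left] using hpm t ht
  exact ⟨hpv_zero, fun s hs t ht => hconv.norm_eq_of_hasDerivWithinAt_cross3_self hpm_free hs ht⟩

/-- if a solution of (60) on an interval J containing 0 has p(0) = 0,
then p ≡ 0 on J and ‖π‖ is constant on J. -/
theorem statement3 (I1 I2 I3 M1 M2 M3 : ℝ)
    (hI1 : 0 < I1) (hI2 : 0 < I2) (hI3 : 0 < I3)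
    (hM1 : 0 < M1) (hM2 : 0 < M2) (hM3 : 0 < M3)
    (J : Set ℝ) (hJ : J.OrdConnected) (h0 : (0 : ℝ) ∈ J)
    (pm pv : ℝ → E3) (hsol : IsSol60On I1 I2 I3 M1 M2 M3 J pm pv)
    (hpv0 : pv 0 = 0) :
    (∀ t ∈ J, pv t = 0) ∧ (∀ s ∈ J, ∀ t ∈ J, ‖pm t‖ = ‖pm s‖) :=
  statement3_general I1 I2 I3 M1 M2 M3 J hJ h0 pm pv hsol hpv0
end
end

section
/- Let a ≥ 0 and γ ∈ ℝ be fixed and let t ↦ (w(t),ẇ(t)) be any solution of the blown-up system (8) on an interval J. Then the curve t ↦ (π(t),p(t)) := (ẇ(t) + γ w(t), a w(t)) is a solution of the Poisson system (60) on J; i.e. the blown-up vector field is a lift of the original vector field by the blow-down map. -/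
noncomputable section

open scoped RealInnerProductSpace

/-! Differentiate π = ẇ + γw and p = aw using (8): since the cross product is bilinear and
𝐌⁻¹ is linear, ẇ×X + γ w×X = π×X and a²·w×𝐌⁻¹w = p×𝐌⁻¹p, which with X = 𝐈⁻¹π are exactly
the right-hand sides of (60). -/

lemma cross3_eq_crossProduct (u v : E3) :
    cross3 u v = WithLp.toLp 2 (crossProduct (WithLp.ofLp u) (WithLp.ofLp v)) := by
  ext i
  fin_cases i <;> rfl

lemma cross3_add_left (u v w : E3) : cross3 (u + v) w = cross3 u w + cross3 v w := by
  simp only [cross3_eq_crossProduct, WithLp.ofLp_add, map_add, LinearMap.add_apply,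
    WithLp.toLp_add]

lemma cross3_smul_left (c : ℝ) (u v : E3) : cross3 (c • u) v = c • cross3 u v := by
  simp only [cross3_eq_crossProduct, WithLp.ofLp_smul, map_smul, LinearMap.smul_apply,
    WithLp.toLp_smul]

lemma cross3_smul_right (c : ℝ) (u v : E3) : cross3 u (c • v) = c • cross3 u v := by
  simp only [cross3_eq_crossProduct, WithLp.ofLp_smul, map_smul, WithLp.toLp_smul]

lemma Minv_smul (M1 M2 M3 c : ℝ) (u : E3) :
    Minv M1 M2 M3 (c • u) = c • Minv M1 M2 M3 u := by
  ext i
  fin_cases i <;> simp [Minv, vec3, mul_div_assoc]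

lemma cross3_smul_Minv_smul (M1 M2 M3 a : ℝ) (w : E3) :
    cross3 (a • w) (Minv M1 M2 M3 (a • w)) = a ^ 2 • cross3 w (Minv M1 M2 M3 w) := by
  rw [Minv_smul, cross3_smul_left, cross3_smul_right, smul_smul, sq]

theorem statement6_general (I1 I2 I3 M1 M2 M3 : ℝ)
    (a γ : ℝ)
    (J : Set ℝ)
    (w dw : ℝ → E3) (hsol : IsSol8On I1 I2 I3 M1 M2 M3 a γ J w dw) :
    IsSol60On I1 I2 I3 M1 M2 M3 J (fun t => dw t + γ • w t) (fun t => a • w t) := by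
  obtain ⟨hw, hdw⟩ := hsol
  refine ⟨fun t ht => ?_, fun t ht => ?_⟩
  · refine ((hdw t ht).add ((hw t ht).const_smul γ)).congr_deriv ?_
    rw [cross3_add_left, cross3_smul_left, cross3_smul_Minv_smul]
    abel
  · exact ((hw t ht).const_smul a).congr_deriv (cross3_smul_left a _ _).symm

/-- the blown-up vector field (8) is a lift of the vector field of
(60) by the blow-down map: if (w,ẇ) solves (8) on an interval J then
(π,p) = (ẇ + γw, aw) solves (60) on J. -/
theorem statement6 (I1 I2 I3 M1 M2 M3 : ℝ)
    (hI1 : 0 < I1) (hI2 : 0 < I2) (hI3 : 0 < I3)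
    (hM1 : 0 < M1) (hM2 : 0 < M2) (hM3 : 0 < M3)
    (a γ : ℝ) (ha : 0 ≤ a)
    (J : Set ℝ) (hJ : J.OrdConnected)
    (w dw : ℝ → E3) (hsol : IsSol8On I1 I2 I3 M1 M2 M3 a γ J w dw) :
    IsSol60On I1 I2 I3 M1 M2 M3 J (fun t => dw t + γ • w t) (fun t => a • w t) :=
  statement6_general I1 I2 I3 M1 M2 M3 a γ J w dw hsol
end
end

section
/- Let α_e > 0 and let Q, P ∈ ℝ with Q² + P² < 4α_e, and define π(Q,P) = ( √(α_e − ¼(Q²+P²)) · P, √(α_e − ¼(Q²+P²)) · Q, α_e − ½(Q²+P²) ) ∈ ℝ³. Then ‖π(Q,P)‖ = α_e, and ½ π(Q,P)·(𝐈⁻¹π(Q,P)) = ½ (α_e − ¼(Q²+P²)) ( (1/I₁ − 1/I₃) P² + (1/I₂ − 1/I₃) Q² ) + α_e²/(2I₃). -/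
noncomputable section

open scoped RealInnerProductSpace

/-!
Writing `s = αe - r / 4` with `r = Q² + P²`, the third coordinate `αe - r / 2` satisfies
`(αe - r / 2)² + s · r = αe²`, while the first two coordinates contribute `s · r` to `‖π‖²`.
So `π(Q, P)` lies on the sphere of radius `αe`, and the Hamiltonian identity is the same
relation after trading `(αe - r / 2)²` for `αe² - s · r`.
-/

def rigidBodyChart (αe Q P : ℝ) : E3 :=
  vec3 (Real.sqrt (αe - (Q ^ 2 + P ^ 2) / 4) * P)
    (Real.sqrt (αe - (Q ^ 2 + P ^ 2) / 4) * Q) (αe - (Q ^ 2 + P ^ 2) / 2)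

@[simp]
lemma vec3_apply_zero (x y z : ℝ) : vec3 x y z 0 = x := rfl

@[simp]
lemma vec3_apply_one (x y z : ℝ) : vec3 x y z 1 = y := rfl

@[simp]
lemma vec3_apply_two (x y z : ℝ) : vec3 x y z 2 = z := rfl

lemma norm_sq_vec3 (x y z : ℝ) : ‖vec3 x y z‖ ^ 2 = x ^ 2 + y ^ 2 + z ^ 2 := by
  simp [EuclideanSpace.real_norm_sq_eq, Fin.sum_univ_three]

lemma inner_Iinv_self (I1 I2 I3 : ℝ) (u : E3) :
    ⟪u, Iinv I1 I2 I3 u⟫ = u 0 ^ 2 / I1 + u 1 ^ 2 / I2 + u 2 ^ 2 / I3 := by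
  simp only [Iinv, PiLp.inner_apply, RCLike.inner_apply, conj_trivial, Fin.sum_univ_three,
    vec3_apply_zero, vec3_apply_one, vec3_apply_two]
  ring

lemma norm_rigidBodyChart {αe Q P : ℝ} (hαe : 0 ≤ αe) (hQP : Q ^ 2 + P ^ 2 ≤ 4 * αe) :
    ‖rigidBodyChart αe Q P‖ = αe := by
  have hs : Real.sqrt (αe - (Q ^ 2 + P ^ 2) / 4) ^ 2 = αe - (Q ^ 2 + P ^ 2) / 4 :=
    Real.sq_sqrt (by linarith)
  rw [← sq_eq_sq₀ (norm_nonneg _) hαe, rigidBodyChart, norm_sq_vec3]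
  linear_combination (P ^ 2 + Q ^ 2) * hs

lemma inner_Iinv_rigidBodyChart (I1 I2 I3 : ℝ) {αe Q P : ℝ} (hQP : Q ^ 2 + P ^ 2 ≤ 4 * αe) :
    (1 / 2) * ⟪rigidBodyChart αe Q P, Iinv I1 I2 I3 (rigidBodyChart αe Q P)⟫
      = (1 / 2) * (αe - (Q ^ 2 + P ^ 2) / 4)
          * ((1 / I1 - 1 / I3) * P ^ 2 + (1 / I2 - 1 / I3) * Q ^ 2)
        + αe ^ 2 / (2 * I3) := by
  have hs : Real.sqrt (αe - (Q ^ 2 + P ^ 2) / 4) ^ 2 = αe - (Q ^ 2 + P ^ 2) / 4 :=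
    Real.sq_sqrt (by linarith)
  rw [inner_Iinv_self, rigidBodyChart, vec3_apply_zero, vec3_apply_one, vec3_apply_two]
  linear_combination (1 / 2 * (P ^ 2 / I1 + Q ^ 2 / I2)) * hs

theorem statement14_general (I1 I2 I3 : ℝ)
    (αe : ℝ) (hαe : 0 < αe) (Q P : ℝ) (hQP : Q ^ 2 + P ^ 2 < 4 * αe)
    (piv : E3)
    (hpiv : piv = vec3 (Real.sqrt (αe - (Q ^ 2 + P ^ 2) / 4) * P)
      (Real.sqrt (αe - (Q ^ 2 + P ^ 2) / 4) * Q) (αe - (Q ^ 2 + P ^ 2) / 2)) :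
    ‖piv‖ = αe ∧
    (1 / 2) * ⟪piv, Iinv I1 I2 I3 piv⟫
      = (1 / 2) * (αe - (Q ^ 2 + P ^ 2) / 4)
          * ((1 / I1 - 1 / I3) * P ^ 2 + (1 / I2 - 1 / I3) * Q ^ 2)
        + αe ^ 2 / (2 * I3) := by
  change piv = rigidBodyChart αe Q P at hpiv
  subst hpiv
  exact ⟨norm_rigidBodyChart hαe.le hQP.le, inner_Iinv_rigidBodyChart I1 I2 I3 hQP.le⟩

/-- the chart π(Q,P) on the rigid-body reduced space ‖π‖ = α_e,
and the Hamiltonian in these coordinates. -/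
theorem statement14 (I1 I2 I3 : ℝ) (hI1 : 0 < I1) (hI2 : 0 < I2) (hI3 : 0 < I3)
    (αe : ℝ) (hαe : 0 < αe) (Q P : ℝ) (hQP : Q ^ 2 + P ^ 2 < 4 * αe)
    (piv : E3)
    (hpiv : piv = vec3 (Real.sqrt (αe - (Q ^ 2 + P ^ 2) / 4) * P)
      (Real.sqrt (αe - (Q ^ 2 + P ^ 2) / 4) * Q) (αe - (Q ^ 2 + P ^ 2) / 2)) :
    ‖piv‖ = αe ∧
    (1 / 2) * ⟪piv, Iinv I1 I2 I3 piv⟫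
      = (1 / 2) * (αe - (Q ^ 2 + P ^ 2) / 4)
          * ((1 / I1 - 1 / I3) * P ^ 2 + (1 / I2 - 1 / I3) * Q ^ 2)
        + αe ^ 2 / (2 * I3) :=
  statement14_general I1 I2 I3 αe hαe Q P hQP piv hpiv
end
end
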